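/- Let f be a positive mild solution of the kinetic equations on [0,T] whose weight denominators Σ_n w^(l)_n F_n(f(t)) and Σ_n w^int_n F_n(f(t)) are strictly positive for all t ∈ [0,T]. Then there exists a constant C > 0, depending only on the model parameters and not on f, such that for all t ∈ [0,T], ‖f(t)‖_{L∞} ≤ ‖f(0)‖_{L∞} · exp( C ∫₀^t Φ(τ) dτ ), where Φ(τ) = β + max_{1 ≤ l ≤ M⁻} Σ_{k=1}^M W^(l)_k(f(τ)). -/

import Mathlib

open MeasureTheory Filter

namespace GBN

structure Params (M : ℕ) where
  hM : 0 < M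
  Mm : ℕ
  M0 : ℕ
  Mp : ℕ
  hsum : Mm + M0 + Mp = M
  v : Fin M → ℝ
  hvneg : ∀ σ : Fin M, (σ : ℕ) < Mm → v σ < 0
  hvzero : ∀ σ : Fin M, Mm ≤ (σ : ℕ) → (σ : ℕ) < Mm + M0 → v σ = 0
  hvpos : ∀ σ : Fin M, Mm + M0 ≤ (σ : ℕ) → 0 < v σ
  Kb : Fin M → ℕ
  hKb : ∀ l : Fin M, (l : ℕ) < Mm → 0 < Kb l
  Jb : Fin M → Fin M → Fin M → ℕ
  hJbdiag : ∀ l σ, Jb l σ σ = 0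
  hJbrow : ∀ l : Fin M, (l : ℕ) < Mm → ∀ s : Fin M, (∑ σ : Fin M, Jb l s σ) = Kb l
  wb : Fin M → Fin M → ℝ
  hwb : ∀ l : Fin M, (l : ℕ) < Mm → ∀ σ : Fin M, 0 < wb l σ
  Kint : ℕ
  hKint : 0 < Kint
  Jint : Fin M → Fin M → ℕ
  hJintdiag : ∀ σ, Jint σ σ = 0
  hJintrow : ∀ s : Fin M, (∑ σ : Fin M, Jint s σ) = Kint
  wint : Fin M → ℝ
  hwint : ∀ σ, 0 < wint σ
  beta : ℝ
  hbeta : 0 ≤ beta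

variable {M : ℕ}

/-- The set of species that can undergo boundary events. -/
def bSet (P : Params M) : Finset (Fin M) := Finset.univ.filter fun l => (l : ℕ) < P.Mm

/-- Positivity of an element of X. -/
def Positive (f : Fin M → ℝ → ℝ) : Prop := ∀ σ : Fin M, ∀ x : ℝ, 0 ≤ x → 0 ≤ f σ x

/-- Nonvanishing of an element of X. -/
def Nonzero (f : Fin M → ℝ → ℝ) : Prop := ∃ σ : Fin M, ∃ x : ℝ, 0 ≤ x ∧ f σ x ≠ 0

/-- Membership in the Banach space X of continuous, integrable (and bounded) functions. -/
def MemX (f : Fin M → ℝ → ℝ) : Prop :=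
  (∀ σ, ContinuousOn (f σ) (Set.Ici 0)) ∧
  (∀ σ, IntegrableOn (f σ) (Set.Ici 0)) ∧
  (∀ σ, BddAbove ((fun x => |f σ x|) '' Set.Ici 0))

noncomputable def normL1 (f : Fin M → ℝ → ℝ) : ℝ :=
  ∑ σ : Fin M, ∫ x in Set.Ici (0:ℝ), |f σ x|

noncomputable def normLinf (f : Fin M → ℝ → ℝ) : ℝ :=
  ∑ σ : Fin M, sSup ((fun x => |f σ x|) '' Set.Ici 0)

/-- The norm of X. -/
noncomputable def normX (f : Fin M → ℝ → ℝ) : ℝ := normL1 f + normLinf f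

/-- Pointwise difference. -/
def subf (f g : Fin M → ℝ → ℝ) : Fin M → ℝ → ℝ := fun σ x => f σ x - g σ x

/-- The total number of particles of species σ. -/
noncomputable def Fc (f : Fin M → ℝ → ℝ) (σ : Fin M) : ℝ := ∫ x in Set.Ici (0:ℝ), f σ x

/-- The total number of particles. -/
noncomputable def Ft (f : Fin M → ℝ → ℝ) : ℝ := ∑ σ : Fin M, Fc f σ

/-- The weighted fraction W_σ for a weight vector w. -/
noncomputable def Wgt (w : Fin M → ℝ) (f : Fin M → ℝ → ℝ) (σ : Fin M) : ℝ :=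
  w σ / ∑ n : Fin M, w n * Fc f n

/-- The weighted fraction γ. -/
noncomputable def gam (P : Params M) (f : Fin M → ℝ → ℝ) : ℝ :=
  Ft f / ∑ n : Fin M, P.wint n * Fc f n

/-- The boundary flux rate L̇_l = -v_l f_l(0). -/
noncomputable def Ldot (P : Params M) (f : Fin M → ℝ → ℝ) (l : Fin M) : ℝ := -(P.v l) * f l 0

/-- The flux j(f). -/
noncomputable def flux (P : Params M) (f : Fin M → ℝ → ℝ) (σ : Fin M) (x : ℝ) : ℝ :=
  (∑ s : Fin M, ((∑ l ∈ bSet P, Ldot P f l * (P.Jb l s σ : ℝ) * Wgt (P.wb l) f s)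
      + P.beta * gam P f * (P.Jint s σ : ℝ) * P.wint s) * f s x)
  - ((∑ l ∈ bSet P, Ldot P f l * (P.Kb l : ℝ) * Wgt (P.wb l) f σ)
      + P.beta * gam P f * (P.Kint : ℝ) * P.wint σ) * f σ x

/-- Extension by zero to negative arguments. -/
noncomputable def ext (g : ℝ → ℝ) (x : ℝ) : ℝ := if 0 ≤ x then g x else 0

/-- Continuity in time of a curve with values in X, i.e. membership in C([0,T];X). -/
def ContinuousInX (T : ℝ) (u : ℝ → Fin M → ℝ → ℝ) : Prop :=
  ∀ t ∈ Set.Icc (0:ℝ) T, ∀ ε > (0:ℝ), ∃ δ > (0:ℝ), ∀ s ∈ Set.Icc (0:ℝ) T,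
    |s - t| < δ → normX (subf (u s) (u t)) < ε

/-- A mild solution of the kinetic equations on [0,T]. -/
def MildSolution (P : Params M) (T : ℝ) (u : ℝ → Fin M → ℝ → ℝ) : Prop :=
  (∀ t ∈ Set.Icc (0:ℝ) T, MemX (u t)) ∧
  ContinuousInX T u ∧
  ∀ σ : Fin M, ∀ x : ℝ, 0 ≤ x → ∀ t ∈ Set.Icc (0:ℝ) T,
    u t σ x = ext (u 0 σ) (x - P.v σ * t)
      + ∫ τ in (0:ℝ)..t, ext (flux P (u τ) σ) (x - P.v σ * (t - τ))

/-- Positivity of a curve on [0,T]. -/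
def PositiveOn (T : ℝ) (u : ℝ → Fin M → ℝ → ℝ) : Prop :=
  ∀ t ∈ Set.Icc (0:ℝ) T, Positive (u t)

/-- u is the unique maximal positive mild solution with initial datum f₀,
defined on [0, Tstar). -/
def IsMaximalSolution (P : Params M) (f₀ : Fin M → ℝ → ℝ)
    (Tstar : ENNReal) (u : ℝ → Fin M → ℝ → ℝ) : Prop :=
  0 < Tstar ∧
  (∀ σ : Fin M, ∀ x : ℝ, 0 ≤ x → u 0 σ x = f₀ σ x) ∧
  (∀ T : ℝ, 0 < T → ENNReal.ofReal T < Tstar → MildSolution P T u ∧ PositiveOn T u) ∧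
  (∀ T : ℝ, 0 < T → ∀ g : ℝ → Fin M → ℝ → ℝ,
      MildSolution P T g → PositiveOn T g → (∀ σ : Fin M, ∀ x : ℝ, 0 ≤ x → g 0 σ x = f₀ σ x) →
      ENNReal.ofReal T < Tstar ∧
        ∀ t ∈ Set.Icc (0:ℝ) T, ∀ σ : Fin M, ∀ x : ℝ, 0 ≤ x → g t σ x = u t σ x)

end GBN

/-!
Transport does not increase the supremum of a species, particles entering through `x = 0` carry
no mass, and collisions only redistribute particles between species: the rate `A s σ`
(`gainRate`) at which `s` turns into `σ` is nonnegative (positivity gives `L̇_l ≥ 0`), and since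
the rows of `J` sum to `K`, the rates out of `s` add up to its loss rate `λ s` (`lossRate`).
Along a characteristic, `f_σ` therefore gains at most `Σ_s A s σ · sup f_s` and loses
`λ σ · f_σ`; summed over `σ` these cancel, so `Σ_σ sup_x f_σ(t, x)` is nonincreasing in `t` and
the estimate holds with `C = 1`. Rigorously: on a short interval `[z, w]` the total supremum
grows by `o(w - z)`, and a fencing argument on `[0, T]` concludes.
-/

open Set Topology

lemma IsCompact.exists_forall_le_of_continuousOn {α ι : Type*} [TopologicalSpace α] [Fintype ι]
    {K : Set α} (hK : IsCompact K) {g : ι → α → ℝ} (hg : ∀ i, ContinuousOn (g i) K) :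
    ∃ C, 0 ≤ C ∧ ∀ x ∈ K, ∀ i, g i x ≤ C := by
  obtain ⟨C, hC⟩ := hK.exists_bound_of_continuousOn (continuousOn_pi.2 hg)
  refine ⟨max C 0, le_max_right _ _, fun x hx i => ?_⟩
  calc g i x ≤ ‖fun j => g j x‖ := (Real.le_norm_self _).trans (norm_le_pi_norm (fun j => g j x) i)
    _ ≤ max C 0 := (hC x hx).trans (le_max_left _ _)

lemma le_of_forall_eventually_sub_le_mul {f : ℝ → ℝ} {a b t : ℝ} (hf : ContinuousOn f (Icc a b))
    (h : ∀ z ∈ Ico a b, ∀ ε > 0, ∀ᶠ w in 𝓝[>] z, f w - f z ≤ ε * (w - z))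
    (ht : t ∈ Icc a b) : f t ≤ f a := by
  refine image_le_of_liminf_slope_right_le_deriv_boundary hf (B := fun _ => f a) (B' := 0) le_rfl
    continuousOn_const (fun _ _ => hasDerivWithinAt_const _ _ _) (fun z hz r hr => ?_) ht
  replace hr : 0 < r := hr
  refine ((h z hz (r / 2) (half_pos hr)).and self_mem_nhdsWithin).mono (fun w hw => ?_)
    |>.frequently
  rw [slope_def_field, div_lt_iff₀ (sub_pos.2 hw.2)]
  nlinarith [hw.1, sub_pos.2 hw.2]

lemma eventually_nhdsGT_forall_Ioc {p : ℝ → Prop} {z : ℝ} (h : ∀ᶠ q in 𝓝[>] z, p q) :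
    ∀ᶠ w in 𝓝[>] z, ∀ q ∈ Ioc z w, p q := by
  obtain ⟨b, hb, hsub⟩ := mem_nhdsGT_iff_exists_Ioo_subset.1 h
  filter_upwards [Ioo_mem_nhdsGT hb] with w hw q hq using hsub ⟨hq.1, hq.2.trans_lt hw.2⟩

namespace GBN

variable {M : ℕ}

lemma ext_of_nonneg (g : ℝ → ℝ) {y : ℝ} (hy : 0 ≤ y) : ext g y = g y := if_pos hy

lemma ext_of_neg (g : ℝ → ℝ) {y : ℝ} (hy : y < 0) : ext g y = 0 := if_neg (not_le.2 hy)

section SupNorm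

noncomputable def speciesSup (f : Fin M → ℝ → ℝ) (σ : Fin M) : ℝ :=
  sSup ((fun x => |f σ x|) '' Ici 0)

variable {f g : Fin M → ℝ → ℝ} {σ : Fin M}

lemma normLinf_eq_sum_speciesSup (f : Fin M → ℝ → ℝ) : normLinf f = ∑ σ, speciesSup f σ := rfl

lemma speciesSup_nonneg (f : Fin M → ℝ → ℝ) (σ : Fin M) : 0 ≤ speciesSup f σ :=
  Real.sSup_nonneg <| by rintro _ ⟨x, -, rfl⟩; exact abs_nonneg _

lemma normLinf_nonneg (f : Fin M → ℝ → ℝ) : 0 ≤ normLinf f :=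
  Finset.sum_nonneg fun σ _ => speciesSup_nonneg f σ

lemma normL1_nonneg (f : Fin M → ℝ → ℝ) : 0 ≤ normL1 f :=
  Finset.sum_nonneg fun _ _ => integral_nonneg fun _ => abs_nonneg _

lemma normX_nonneg (f : Fin M → ℝ → ℝ) : 0 ≤ normX f :=
  add_nonneg (normL1_nonneg f) (normLinf_nonneg f)

lemma speciesSup_le_normX (f : Fin M → ℝ → ℝ) (σ : Fin M) : speciesSup f σ ≤ normX f :=
  (Finset.single_le_sum (fun τ _ => speciesSup_nonneg f τ) (Finset.mem_univ σ)).trans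
    (le_add_of_nonneg_left (normL1_nonneg f))

lemma abs_le_speciesSup (hf : BddAbove ((fun x => |f σ x|) '' Ici 0)) {x : ℝ} (hx : 0 ≤ x) :
    |f σ x| ≤ speciesSup f σ :=
  le_csSup hf ⟨x, hx, rfl⟩

lemma speciesSup_le {c : ℝ} (h : ∀ x, 0 ≤ x → |f σ x| ≤ c) : speciesSup f σ ≤ c :=
  csSup_le ⟨|f σ 0|, 0, self_mem_Ici, rfl⟩ (by rintro _ ⟨x, hx, rfl⟩; exact h x hx)

lemma ext_le_speciesSup (hf : BddAbove ((fun x => |f σ x|) '' Ici 0)) (y : ℝ) :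
    ext (f σ) y ≤ speciesSup f σ := by
  unfold ext
  split_ifs with hy
  · exact (le_abs_self _).trans (abs_le_speciesSup hf hy)
  · exact speciesSup_nonneg f σ

lemma ext_nonneg (hf : Positive f) (σ : Fin M) (y : ℝ) : 0 ≤ ext (f σ) y := by
  unfold ext
  split_ifs with hy
  exacts [hf σ y hy, le_rfl]

lemma bddAbove_subf (hf : MemX f) (hg : MemX g) (σ : Fin M) :
    BddAbove ((fun x => |subf f g σ x|) '' Ici 0) := by
  obtain ⟨a, ha⟩ := hf.2.2 σ
  obtain ⟨b, hb⟩ := hg.2.2 σ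
  refine ⟨a + b, ?_⟩
  rintro _ ⟨x, hx, rfl⟩
  exact (abs_sub _ _).trans (add_le_add (ha ⟨x, hx, rfl⟩) (hb ⟨x, hx, rfl⟩))

lemma abs_sub_le_normX (hf : MemX f) (hg : MemX g) (σ : Fin M) {x : ℝ} (hx : 0 ≤ x) :
    |f σ x - g σ x| ≤ normX (subf f g) :=
  (abs_le_speciesSup (bddAbove_subf hf hg σ) hx).trans (speciesSup_le_normX _ σ)

lemma abs_speciesSup_sub_le_normX (hf : MemX f) (hg : MemX g) (σ : Fin M) :
    |speciesSup f σ - speciesSup g σ| ≤ normX (subf f g) := by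
  have hdiff : ∀ x, 0 ≤ x → |(|f σ x| - |g σ x|)| ≤ speciesSup (subf f g) σ := fun x hx =>
    (abs_abs_sub_abs_le_abs_sub _ _).trans (abs_le_speciesSup (bddAbove_subf hf hg σ) hx)
  have hf_le : speciesSup f σ ≤ speciesSup g σ + speciesSup (subf f g) σ :=
    speciesSup_le fun x hx => by
      linarith [(abs_le.1 (hdiff x hx)).2, abs_le_speciesSup (hg.2.2 σ) hx]
  have hg_le : speciesSup g σ ≤ speciesSup f σ + speciesSup (subf f g) σ :=
    speciesSup_le fun x hx => by
      linarith [(abs_le.1 (hdiff x hx)).1, abs_le_speciesSup (hf.2.2 σ) hx]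
  exact (abs_sub_le_iff.2 ⟨by linarith, by linarith⟩).trans (speciesSup_le_normX _ σ)

lemma abs_Fc_sub_le_normX (hf : MemX f) (hg : MemX g) (σ : Fin M) :
    |Fc f σ - Fc g σ| ≤ normX (subf f g) :=
  calc |Fc f σ - Fc g σ| = |∫ x in Ici (0:ℝ), (f σ x - g σ x)| := by
        rw [Fc, Fc, integral_sub (hf.2.1 σ) (hg.2.1 σ)]
    _ ≤ ∫ x in Ici (0:ℝ), |f σ x - g σ x| := abs_integral_le_integral_abs
    _ ≤ normL1 (subf f g) :=
        Finset.single_le_sum (f := fun τ => ∫ x in Ici (0:ℝ), |f τ x - g τ x|)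
          (fun τ _ => integral_nonneg fun _ => abs_nonneg _) (Finset.mem_univ σ)
    _ ≤ normX (subf f g) := le_add_of_nonneg_right (normLinf_nonneg _)

end SupNorm

namespace ContinuousInX

variable {T : ℝ} {u : ℝ → Fin M → ℝ → ℝ}

lemma tendsto_normX_subf (hu : ContinuousInX T u) {r₀ : ℝ} (hr₀ : r₀ ∈ Icc 0 T) :
    Tendsto (fun r => normX (subf (u r) (u r₀))) (𝓝[Icc 0 T] r₀) (𝓝 0) := by
  rw [Metric.tendsto_nhdsWithin_nhds]
  intro ε hε
  obtain ⟨δ, hδ, h⟩ := hu r₀ hr₀ ε hε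
  refine ⟨δ, hδ, fun r hr hd => ?_⟩
  rw [Real.dist_eq, sub_zero, abs_of_nonneg (normX_nonneg _)]
  exact h r hr (by rwa [← Real.dist_eq])

lemma continuousOn_of_abs_sub_le (hu : ContinuousInX T u) {φ : ℝ → ℝ}
    (h : ∀ a ∈ Icc 0 T, ∀ b ∈ Icc 0 T, |φ a - φ b| ≤ normX (subf (u a) (u b))) :
    ContinuousOn φ (Icc 0 T) := fun r₀ hr₀ =>
  tendsto_iff_norm_sub_tendsto_zero.2 <| squeeze_zero' (Eventually.of_forall fun _ => norm_nonneg _)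
    (eventually_nhdsWithin_of_forall fun r hr => h r hr r₀ hr₀) (hu.tendsto_normX_subf hr₀)

lemma continuousOn_speciesSup (hu : ContinuousInX T u) (hmem : ∀ t ∈ Icc 0 T, MemX (u t))
    (σ : Fin M) : ContinuousOn (fun r => speciesSup (u r) σ) (Icc 0 T) :=
  hu.continuousOn_of_abs_sub_le fun a ha b hb =>
    abs_speciesSup_sub_le_normX (hmem a ha) (hmem b hb) σ

lemma continuousOn_Fc (hu : ContinuousInX T u) (hmem : ∀ t ∈ Icc 0 T, MemX (u t))
    (σ : Fin M) : ContinuousOn (fun r => Fc (u r) σ) (Icc 0 T) :=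
  hu.continuousOn_of_abs_sub_le fun a ha b hb => abs_Fc_sub_le_normX (hmem a ha) (hmem b hb) σ

lemma continuousOn_eval_comp (hu : ContinuousInX T u) (hmem : ∀ t ∈ Icc 0 T, MemX (u t))
    (σ : Fin M) {p : ℝ → ℝ} (hp : Continuous p) :
    ContinuousOn (fun r => u r σ (p r)) (Icc 0 T ∩ p ⁻¹' Ici 0) := by
  intro r₀ hr₀
  have hnear : Tendsto (fun r => u r σ (p r) - u r₀ σ (p r)) (𝓝[Icc 0 T ∩ p ⁻¹' Ici 0] r₀) (𝓝 0) :=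
    squeeze_zero_norm' (eventually_nhdsWithin_of_forall fun r hr =>
        abs_sub_le_normX (hmem r hr.1) (hmem r₀ hr₀.1) σ hr.2)
      ((hu.tendsto_normX_subf hr₀.1).mono_left (nhdsWithin_mono _ inter_subset_left))
  have hslice : Tendsto (fun r => u r₀ σ (p r)) (𝓝[Icc 0 T ∩ p ⁻¹' Ici 0] r₀)
      (𝓝 (u r₀ σ (p r₀))) :=
    ((hmem r₀ hr₀.1).1 σ (p r₀) hr₀.2).comp hp.continuousWithinAt
      (fun _ hr => hr.2)
  simpa [ContinuousWithinAt] using hnear.add hslice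

lemma continuousOn_eval_zero (hu : ContinuousInX T u) (hmem : ∀ t ∈ Icc 0 T, MemX (u t))
    (σ : Fin M) : ContinuousOn (fun r => u r σ 0) (Icc 0 T) := by
  simpa using hu.continuousOn_eval_comp hmem σ continuous_const (p := fun _ => 0)

end ContinuousInX

section Rates

variable (P : Params M) (f : Fin M → ℝ → ℝ)

def PositiveDenominators : Prop :=
  (∀ l ∈ bSet P, 0 < ∑ n : Fin M, P.wb l n * Fc f n) ∧ 0 < ∑ n : Fin M, P.wint n * Fc f n

noncomputable def gainRate (s σ : Fin M) : ℝ :=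
  (∑ l ∈ bSet P, Ldot P f l * (P.Jb l s σ : ℝ) * Wgt (P.wb l) f s)
    + P.beta * gam P f * (P.Jint s σ : ℝ) * P.wint s

noncomputable def lossRate (σ : Fin M) : ℝ :=
  (∑ l ∈ bSet P, Ldot P f l * (P.Kb l : ℝ) * Wgt (P.wb l) f σ)
    + P.beta * gam P f * (P.Kint : ℝ) * P.wint σ

noncomputable def gainBound (σ : Fin M) : ℝ := ∑ s, gainRate P f s σ * speciesSup f s

lemma flux_eq (σ : Fin M) (x : ℝ) :
    flux P f σ x = ∑ s, gainRate P f s σ * f s x - lossRate P f σ * f σ x := rfl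

lemma sum_gainRate (s : Fin M) : ∑ σ, gainRate P f s σ = lossRate P f s := by
  have hJb : ∀ l ∈ bSet P, ∑ σ, (P.Jb l s σ : ℝ) = P.Kb l := fun l hl => by
    exact_mod_cast P.hJbrow l (Finset.mem_filter.1 hl).2 s
  have hJint : ∑ σ, (P.Jint s σ : ℝ) = P.Kint := by exact_mod_cast P.hJintrow s
  simp only [gainRate, lossRate, Finset.sum_add_distrib, ← Finset.sum_mul, ← Finset.mul_sum,
    hJint]
  rw [Finset.sum_comm]
  congr 1
  refine Finset.sum_congr rfl fun l hl => ?_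
  rw [← Finset.sum_mul, ← Finset.mul_sum, hJb l hl]

lemma sum_gainBound : ∑ σ, gainBound P f σ = ∑ s, lossRate P f s * speciesSup f s := by
  simp only [gainBound]
  rw [Finset.sum_comm]
  simp only [← Finset.sum_mul, sum_gainRate]

variable {P f}

lemma Fc_nonneg (hf : Positive f) (σ : Fin M) : 0 ≤ Fc f σ :=
  setIntegral_nonneg measurableSet_Ici fun x hx => hf σ x hx

lemma Ldot_nonneg (hf : Positive f) {l : Fin M} (hl : l ∈ bSet P) : 0 ≤ Ldot P f l :=
  mul_nonneg (neg_nonneg.2 (P.hvneg l (Finset.mem_filter.1 hl).2).le) (hf l 0 le_rfl)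

lemma Wgt_nonneg {w : Fin M → ℝ} {σ : Fin M} (hw : 0 ≤ w σ) (hd : 0 ≤ ∑ n, w n * Fc f n) :
    0 ≤ Wgt w f σ :=
  div_nonneg hw hd

lemma gainRate_nonneg (hf : Positive f) (hd : PositiveDenominators P f) (s σ : Fin M) :
    0 ≤ gainRate P f s σ := by
  refine add_nonneg (Finset.sum_nonneg fun l hl => mul_nonneg (mul_nonneg (Ldot_nonneg hf hl)
    (Nat.cast_nonneg _)) (Wgt_nonneg (P.hwb l (Finset.mem_filter.1 hl).2 s).le (hd.1 l hl).le)) ?_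
  have hgam : 0 ≤ gam P f :=
    div_nonneg (Finset.sum_nonneg fun n _ => Fc_nonneg hf n) hd.2.le
  have := P.hbeta
  have := P.hwint s
  positivity

lemma lossRate_nonneg (hf : Positive f) (hd : PositiveDenominators P f) (σ : Fin M) :
    0 ≤ lossRate P f σ :=
  sum_gainRate P f σ ▸ Finset.sum_nonneg fun τ _ => gainRate_nonneg hf hd σ τ

lemma gainBound_nonneg (hf : Positive f) (hd : PositiveDenominators P f) (σ : Fin M) :
    0 ≤ gainBound P f σ :=
  Finset.sum_nonneg fun s _ => mul_nonneg (gainRate_nonneg hf hd s σ) (speciesSup_nonneg f s)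

lemma ext_flux_le (hf : Positive f) (hmem : MemX f) (hd : PositiveDenominators P f)
    (σ : Fin M) (y : ℝ) :
    ext (flux P f σ) y ≤ gainBound P f σ - lossRate P f σ * ext (f σ) y := by
  unfold ext
  split_ifs with hy
  · rw [flux_eq]
    gcongr
    exact Finset.sum_le_sum fun s _ => mul_le_mul_of_nonneg_left
      ((le_abs_self _).trans (abs_le_speciesSup (hmem.2.2 s) hy)) (gainRate_nonneg hf hd s σ)
  · simpa using gainBound_nonneg hf hd σ

end Rates

namespace MildSolution

variable {P : Params M} {T : ℝ} {u : ℝ → Fin M → ℝ → ℝ}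

lemma continuousOn_speciesSup (hu : MildSolution P T u) (σ : Fin M) :
    ContinuousOn (fun r => speciesSup (u r) σ) (Icc 0 T) :=
  hu.2.1.continuousOn_speciesSup hu.1 σ

lemma continuousOn_gainRate (hu : MildSolution P T u)
    (hd : ∀ t ∈ Icc 0 T, PositiveDenominators P (u t)) (s σ : Fin M) :
    ContinuousOn (fun r => gainRate P (u r) s σ) (Icc 0 T) := by
  obtain ⟨hmem, hcont, -⟩ := hu
  have hFc : ∀ w : Fin M → ℝ, ContinuousOn (fun r => ∑ n, w n * Fc (u r) n) (Icc 0 T) := fun w =>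
    continuousOn_finsetSum _ fun n _ => continuousOn_const.mul (hcont.continuousOn_Fc hmem n)
  have hgam : ContinuousOn (fun r => gam P (u r)) (Icc 0 T) :=
    (continuousOn_finsetSum _ fun n _ => hcont.continuousOn_Fc hmem n).div (hFc P.wint)
      fun r hr => (hd r hr).2.ne'
  refine (continuousOn_finsetSum _ fun l hl => ?_).add ?_
  · exact ((continuousOn_const.mul (hcont.continuousOn_eval_zero hmem l)).mul
      continuousOn_const).mul
      (continuousOn_const.div (hFc (P.wb l)) fun r hr => ((hd r hr).1 l hl).ne')
  · exact ((continuousOn_const.mul hgam).mul continuousOn_const).mul continuousOn_const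

lemma continuousOn_lossRate (hu : MildSolution P T u)
    (hd : ∀ t ∈ Icc 0 T, PositiveDenominators P (u t)) (σ : Fin M) :
    ContinuousOn (fun r => lossRate P (u r) σ) (Icc 0 T) := by
  simp only [← sum_gainRate]
  exact continuousOn_finsetSum _ fun τ _ => hu.continuousOn_gainRate hd σ τ

lemma continuousOn_gainBound (hu : MildSolution P T u)
    (hd : ∀ t ∈ Icc 0 T, PositiveDenominators P (u t)) (σ : Fin M) :
    ContinuousOn (fun r => gainBound P (u r) σ) (Icc 0 T) :=
  continuousOn_finsetSum _ fun s _ =>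
    (hu.continuousOn_gainRate hd s σ).mul (hu.continuousOn_speciesSup s)

lemma continuousOn_flux_comp (hu : MildSolution P T u)
    (hd : ∀ t ∈ Icc 0 T, PositiveDenominators P (u t)) (σ : Fin M) {p : ℝ → ℝ}
    (hp : Continuous p) :
    ContinuousOn (fun r => flux P (u r) σ (p r)) (Icc 0 T ∩ p ⁻¹' Ici 0) := by
  have heval := hu.2.1.continuousOn_eval_comp hu.1 (p := p)
  simp only [flux_eq]
  exact (continuousOn_finsetSum _ fun s _ =>
    ((hu.continuousOn_gainRate hd s σ).mono inter_subset_left).mul (heval s hp)).sub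
    (((hu.continuousOn_lossRate hd σ).mono inter_subset_left).mul (heval σ hp))

lemma intervalIntegrable_ext_flux_comp (hu : MildSolution P T u)
    (hd : ∀ t ∈ Icc 0 T, PositiveDenominators P (u t)) (σ : Fin M) {p : ℝ → ℝ}
    (hp : Continuous p) {a b : ℝ} (ha : a ∈ Icc 0 T) (hb : b ∈ Icc 0 T) :
    IntervalIntegrable (fun r => ext (flux P (u r) σ) (p r)) volume a b := by
  have hclosed : IsClosed {r | 0 ≤ p r} := isClosed_le continuous_const hp
  have hind : (fun r => ext (flux P (u r) σ) (p r))
      = {r | 0 ≤ p r}.indicator (fun r => flux P (u r) σ (p r)) := by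
    funext r
    simp only [ext, indicator, mem_ofPred_eq]
  rw [hind, intervalIntegrable_iff, integrableOn_indicator_iff hclosed.measurableSet]
  refine IntegrableOn.mono_set ?_ (inter_subset_inter_right _ uIoc_subset_uIcc)
  refine ContinuousOn.integrableOn_compact (isCompact_uIcc.inter_left hclosed) ?_
  exact (hu.continuousOn_flux_comp hd σ hp).mono
    fun r hr => ⟨uIcc_subset_Icc ha hb hr.2, hr.1⟩

/-- When the backward characteristic through `(w, x)` leaves the half-line before time `z` (only
possible for `v σ > 0`), both the initial term and the flux before `z` vanish. -/
lemma eq_restart (hu : MildSolution P T u) (hd : ∀ t ∈ Icc 0 T, PositiveDenominators P (u t))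
    (σ : Fin M) {z w x : ℝ} (hz : 0 ≤ z) (hzw : z ≤ w) (hwT : w ≤ T) (hx : 0 ≤ x) :
    u w σ x = ext (u z σ) (x - P.v σ * (w - z))
      + ∫ q in z..w, ext (flux P (u q) σ) (x - P.v σ * (w - q)) := by
  have hint : ∀ a ∈ Icc 0 T, ∀ b ∈ Icc 0 T, IntervalIntegrable
      (fun q => ext (flux P (u q) σ) (x - P.v σ * (w - q))) volume a b :=
    fun a ha b hb => hu.intervalIntegrable_ext_flux_comp hd σ (by fun_prop) ha hb
  have hformula := hu.2.2 σ
  have hzT : z ∈ Icc 0 T := ⟨hz, hzw.trans hwT⟩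
  have hwT' : w ∈ Icc 0 T := ⟨hz.trans hzw, hwT⟩
  rw [hformula x hx w hwT', ← intervalIntegral.integral_add_adjacent_intervals
    (hint 0 ⟨le_rfl, hz.trans hzT.2⟩ z hzT) (hint z hzT w hwT'), ← add_assoc]
  congr 1
  rcases le_or_gt 0 (x - P.v σ * (w - z)) with hpos | hneg
  · have hshift : ∀ q, x - P.v σ * (w - z) - P.v σ * (z - q) = x - P.v σ * (w - q) :=
      fun q => by ring
    rw [ext_of_nonneg _ hpos, hformula _ hpos z hzT, sub_sub, ← mul_add, sub_add_cancel]
    simp only [hshift]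
  · have hv : 0 < P.v σ := by nlinarith
    have hnil : ∀ q ≤ z, ext (flux P (u q) σ) (x - P.v σ * (w - q)) = 0 := fun q hq =>
      ext_of_neg _ (by nlinarith)
    rw [ext_of_neg _ hneg, ext_of_neg _ (by nlinarith), zero_add,
      intervalIntegral.integral_congr (g := fun _ => 0) fun q hq => hnil q ?_,
      intervalIntegral.integral_zero]
    exact (uIcc_of_le hz ▸ hq).2

end MildSolution

structure PositiveMildSolution (P : Params M) (T : ℝ) (u : ℝ → Fin M → ℝ → ℝ) : Prop where
  mild : MildSolution P T u
  nonneg : PositiveOn T u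
  den : ∀ t ∈ Icc 0 T, PositiveDenominators P (u t)

namespace PositiveMildSolution

variable {P : Params M} {T : ℝ} {u : ℝ → Fin M → ℝ → ℝ}

lemma ext_flux_le (hu : PositiveMildSolution P T u) (σ : Fin M) {q : ℝ}
    (hq : q ∈ Icc 0 T) (y : ℝ) :
    ext (flux P (u q) σ) y ≤ gainBound P (u q) σ - lossRate P (u q) σ * ext (u q σ) y :=
  GBN.ext_flux_le (hu.nonneg q hq) (hu.mild.1 q hq) (hu.den q hq) σ y

lemma lossRate_nonneg (hu : PositiveMildSolution P T u) {q : ℝ} (hq : q ∈ Icc 0 T) (σ : Fin M) :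
    0 ≤ lossRate P (u q) σ :=
  GBN.lossRate_nonneg (hu.nonneg q hq) (hu.den q hq) σ

lemma gainBound_nonneg (hu : PositiveMildSolution P T u) {q : ℝ} (hq : q ∈ Icc 0 T) (σ : Fin M) :
    0 ≤ gainBound P (u q) σ :=
  GBN.gainBound_nonneg (hu.nonneg q hq) (hu.den q hq) σ

lemma apply_sub_le_ext (hu : PositiveMildSolution P T u) (σ : Fin M) {q w x G : ℝ}
    (hq : 0 ≤ q) (hqw : q ≤ w) (hwT : w ≤ T) (hx : 0 ≤ x)
    (hG : ∀ r ∈ Icc q w, gainBound P (u r) σ ≤ G) :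
    u w σ x - G * (w - q) ≤ ext (u q σ) (x - P.v σ * (w - q)) := by
  have hIcc : ∀ r ∈ Icc q w, r ∈ Icc 0 T := fun r hr => ⟨hq.trans hr.1, hr.2.trans hwT⟩
  have hflux : ∫ r in q..w, ext (flux P (u r) σ) (x - P.v σ * (w - r)) ≤ ∫ _ in q..w, G := by
    refine intervalIntegral.integral_mono_on hqw (hu.mild.intervalIntegrable_ext_flux_comp hu.den σ
      (by fun_prop) (hIcc q ⟨le_rfl, hqw⟩) (hIcc w ⟨hqw, le_rfl⟩)) intervalIntegrable_const
      fun r hr => (hu.ext_flux_le σ (hIcc r hr) _).trans ?_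
    exact (sub_le_self _ (mul_nonneg (hu.lossRate_nonneg (hIcc r hr) σ)
      (ext_nonneg (hu.nonneg r (hIcc r hr)) σ _))).trans (hG r hr)
  rw [intervalIntegral.integral_const, smul_eq_mul] at hflux
  linarith [hu.mild.eq_restart hu.den σ hq hqw hwT hx]

/-- The loss along the characteristic through `(w, x)` is compared with the endpoint value
`u w σ x` by `apply_sub_le_ext`, at the price of the quadratic error. -/
lemma apply_mul_one_add_le (hu : PositiveMildSolution P T u) (σ : Fin M) {z w x Λ G : ℝ}
    (hz : 0 ≤ z) (hzw : z ≤ w) (hwT : w ≤ T) (hx : 0 ≤ x)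
    (hΛ : ∀ q ∈ Icc z w, lossRate P (u q) σ ≤ Λ) (hG : ∀ q ∈ Icc z w, gainBound P (u q) σ ≤ G) :
    u w σ x * (1 + ∫ q in z..w, lossRate P (u q) σ) ≤
      speciesSup (u z) σ + (∫ q in z..w, gainBound P (u q) σ) + Λ * G * (w - z) ^ 2 := by
  have hIcc : ∀ q ∈ Icc z w, q ∈ Icc 0 T := fun q hq => ⟨hz.trans hq.1, hq.2.trans hwT⟩
  have hzw' : uIcc z w ⊆ Icc 0 T := uIcc_subset_Icc (hIcc z ⟨le_rfl, hzw⟩) (hIcc w ⟨hzw, le_rfl⟩)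
  have hG0 : 0 ≤ G :=
    (hu.gainBound_nonneg (hIcc w ⟨hzw, le_rfl⟩) σ).trans (hG w ⟨hzw, le_rfl⟩)
  have hψ : ∀ q ∈ Icc z w, ext (flux P (u q) σ) (x - P.v σ * (w - q)) ≤
      gainBound P (u q) σ - lossRate P (u q) σ * u w σ x + Λ * G * (w - z) := by
    intro q hq
    have hφ := hu.apply_sub_le_ext σ (hIcc q hq).1 hq.2 hwT hx
      fun r hr => hG r ⟨hq.1.trans hr.1, hr.2⟩
    have hloss := hu.lossRate_nonneg (hIcc q hq) σ
    have h1 := mul_le_mul_of_nonneg_left hφ hloss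
    have h2 := mul_le_mul_of_nonneg_right (hΛ q hq) (mul_nonneg hG0 (sub_nonneg.2 hzw))
    have h3 := mul_nonneg hloss (mul_nonneg hG0 (sub_nonneg.2 hq.1))
    nlinarith [hu.ext_flux_le σ (hIcc q hq) (x - P.v σ * (w - q))]
  have hgain : IntervalIntegrable (fun q => gainBound P (u q) σ) volume z w :=
    ((hu.mild.continuousOn_gainBound hu.den σ).mono hzw').intervalIntegrable
  have hlossy : IntervalIntegrable (fun q => lossRate P (u q) σ * u w σ x) volume z w :=
    (((hu.mild.continuousOn_lossRate hu.den σ).mono hzw').mul continuousOn_const).intervalIntegrable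
  have hint := intervalIntegral.integral_mono_on hzw
    (hu.mild.intervalIntegrable_ext_flux_comp hu.den σ
    (by fun_prop) (hIcc z ⟨le_rfl, hzw⟩) (hIcc w ⟨hzw, le_rfl⟩))
    ((hgain.sub hlossy).add intervalIntegrable_const) hψ
  rw [intervalIntegral.integral_add (hgain.sub hlossy) intervalIntegrable_const,
    intervalIntegral.integral_sub hgain hlossy, intervalIntegral.integral_mul_const,
    intervalIntegral.integral_const, smul_eq_mul] at hint
  have hstart :=
    ext_le_speciesSup ((hu.mild.1 z (hIcc z ⟨le_rfl, hzw⟩)).2.2 σ) (x - P.v σ * (w - z))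
  nlinarith [hu.mild.eq_restart hu.den σ hz hzw hwT hx]

lemma speciesSup_mul_one_add_le (hu : PositiveMildSolution P T u) (σ : Fin M) {z w Λ G : ℝ}
    (hz : 0 ≤ z) (hzw : z ≤ w) (hwT : w ≤ T)
    (hΛ : ∀ q ∈ Icc z w, lossRate P (u q) σ ≤ Λ) (hG : ∀ q ∈ Icc z w, gainBound P (u q) σ ≤ G) :
    speciesSup (u w) σ * (1 + ∫ q in z..w, lossRate P (u q) σ) ≤
      speciesSup (u z) σ + (∫ q in z..w, gainBound P (u q) σ) + Λ * G * (w - z) ^ 2 := by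
  have hwT' : w ∈ Icc 0 T := ⟨hz.trans hzw, hwT⟩
  have hI : 0 < 1 + ∫ q in z..w, lossRate P (u q) σ := by
    refine add_pos_of_pos_of_nonneg one_pos (intervalIntegral.integral_nonneg hzw fun q hq => ?_)
    have hq' : q ∈ Icc 0 T := ⟨hz.trans hq.1, hq.2.trans hwT⟩
    exact hu.lossRate_nonneg hq' σ
  rw [← le_div_iff₀ hI]
  refine speciesSup_le fun x hx => ?_
  rw [abs_of_nonneg (hu.nonneg w hwT' σ x hx), le_div_iff₀ hI]
  exact hu.apply_mul_one_add_le σ hz hzw hwT hx hΛ hG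

/-- Summed over species, the gains cancel the losses (`sum_gainBound`) up to the variation of
`speciesSup` over `[z, w]`. -/
lemma normLinf_sub_le (hu : PositiveMildSolution P T u) {z w Λ G : ℝ}
    (hz : 0 ≤ z) (hzw : z ≤ w) (hwT : w ≤ T)
    (hΛ : ∀ q ∈ Icc z w, ∀ σ, lossRate P (u q) σ ≤ Λ)
    (hG : ∀ q ∈ Icc z w, ∀ σ, gainBound P (u q) σ ≤ G) :
    normLinf (u w) - normLinf (u z) ≤
      (∫ q in z..w, ∑ n, lossRate P (u q) n * (speciesSup (u q) n - speciesSup (u w) n))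
        + M * (Λ * G * (w - z) ^ 2) := by
  have hzw' : uIcc z w ⊆ Icc 0 T := uIcc_subset_Icc ⟨hz, hzw.trans hwT⟩ ⟨hz.trans hzw, hwT⟩
  have hloss : ∀ n, ContinuousOn (fun q => lossRate P (u q) n) (uIcc z w) := fun n =>
    (hu.mild.continuousOn_lossRate hu.den n).mono hzw'
  have hcur : ∀ n, ContinuousOn (fun q => lossRate P (u q) n * speciesSup (u q) n) (uIcc z w) :=
    fun n => (hloss n).mul ((hu.mild.continuousOn_speciesSup n).mono hzw')
  have hend : ∀ n, ContinuousOn (fun q => lossRate P (u q) n * speciesSup (u w) n) (uIcc z w) :=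
    fun n => (hloss n).mul continuousOn_const
  have hgain : ∑ σ, ∫ q in z..w, gainBound P (u q) σ =
      ∫ q in z..w, ∑ n, lossRate P (u q) n * speciesSup (u q) n := by
    rw [← intervalIntegral.integral_finsetSum fun σ _ =>
      ((hu.mild.continuousOn_gainBound hu.den σ).mono hzw').intervalIntegrable]
    simp only [sum_gainBound]
  have hlosses : ∑ σ, speciesSup (u w) σ * ∫ q in z..w, lossRate P (u q) σ =
      ∫ q in z..w, ∑ n, lossRate P (u q) n * speciesSup (u w) n := by
    rw [intervalIntegral.integral_finsetSum fun n _ => (hend n).intervalIntegrable]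
    simp only [intervalIntegral.integral_mul_const, mul_comm]
  have hdiff : (∫ q in z..w, ∑ n, lossRate P (u q) n * (speciesSup (u q) n - speciesSup (u w) n))
      = (∫ q in z..w, ∑ n, lossRate P (u q) n * speciesSup (u q) n)
        - ∫ q in z..w, ∑ n, lossRate P (u q) n * speciesSup (u w) n := by
    rw [← intervalIntegral.integral_sub
      (continuousOn_finsetSum _ fun n _ => hcur n).intervalIntegrable
      (continuousOn_finsetSum _ fun n _ => hend n).intervalIntegrable]
    simp only [mul_sub, Finset.sum_sub_distrib]
  have hsum := Finset.sum_le_sum fun σ (_ : σ ∈ Finset.univ) =>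
    hu.speciesSup_mul_one_add_le σ hz hzw hwT (fun q hq => hΛ q hq σ) (fun q hq => hG q hq σ)
  simp only [mul_add, mul_one, Finset.sum_add_distrib, Finset.sum_const, Finset.card_univ,
    Fintype.card_fin, nsmul_eq_mul] at hsum
  rw [normLinf_eq_sum_speciesSup, normLinf_eq_sum_speciesSup, hdiff, ← hgain, ← hlosses]
  linarith

lemma normLinf_sub_le_of_forall_abs_sub_le (hu : PositiveMildSolution P T u)
    {z w Λ G η : ℝ} (hz : 0 ≤ z) (hzw : z ≤ w) (hwT : w ≤ T)
    (hΛ : ∀ q ∈ Icc z w, ∀ σ, lossRate P (u q) σ ≤ Λ)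
    (hG : ∀ q ∈ Icc z w, ∀ σ, gainBound P (u q) σ ≤ G)
    (hclose : ∀ q ∈ Icc z w, ∀ σ, |speciesSup (u q) σ - speciesSup (u z) σ| ≤ η) :
    normLinf (u w) - normLinf (u z) ≤
      (w - z) * (M * (Λ * (2 * η))) + M * (Λ * G * (w - z) ^ 2) := by
  have hIcc : ∀ q ∈ Icc z w, q ∈ Icc 0 T := fun q hq => ⟨hz.trans hq.1, hq.2.trans hwT⟩
  have hvar : ∀ q ∈ Icc z w, ∑ σ, lossRate P (u q) σ * (speciesSup (u q) σ - speciesSup (u w) σ)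
      ≤ M * (Λ * (2 * η)) := by
    intro q hq
    calc _ ≤ ∑ _σ : Fin M, Λ * (2 * η) := Finset.sum_le_sum fun σ _ => by
            have h1 := abs_le.1 (hclose q hq σ)
            have h2 := abs_le.1 (hclose w ⟨hzw, le_rfl⟩ σ)
            have hη := (abs_nonneg _).trans (hclose q hq σ)
            exact (mul_le_mul_of_nonneg_left (show _ ≤ 2 * η by linarith)
              (hu.lossRate_nonneg (hIcc q hq) σ)).trans
              (mul_le_mul_of_nonneg_right (hΛ q hq σ) (by positivity))
      _ = _ := by simp
  have hsub : uIcc z w ⊆ Icc 0 T := fun q hq => hIcc q (uIcc_of_le hzw ▸ hq)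
  have hint := intervalIntegral.integral_mono_on hzw
    (f := fun q => ∑ σ, lossRate P (u q) σ * (speciesSup (u q) σ - speciesSup (u w) σ))
    (μ := volume) (ContinuousOn.intervalIntegrable <|
      continuousOn_finsetSum _ fun σ _ => ((hu.mild.continuousOn_lossRate hu.den σ).mono hsub).mul
        (((hu.mild.continuousOn_speciesSup σ).mono hsub).sub continuousOn_const))
    intervalIntegrable_const hvar
  rw [intervalIntegral.integral_const, smul_eq_mul] at hint
  linarith [hu.normLinf_sub_le hz hzw hwT hΛ hG]

lemma eventually_normLinf_sub_le (hu : PositiveMildSolution P T u) {z : ℝ} (hz : z ∈ Ico 0 T)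
    {ε : ℝ} (hε : 0 < ε) : ∀ᶠ w in 𝓝[>] z, normLinf (u w) - normLinf (u z) ≤ ε * (w - z) := by
  obtain ⟨Λ, hΛ0, hΛ⟩ :=
    isCompact_Icc.exists_forall_le_of_continuousOn (hu.mild.continuousOn_lossRate hu.den)
  obtain ⟨G, hG0, hG⟩ :=
    isCompact_Icc.exists_forall_le_of_continuousOn (hu.mild.continuousOn_gainBound hu.den)
  set η := ε / (4 * (M * Λ + 1))
  set δ := ε / (2 * (M * Λ * G + 1))
  have hη : 0 < η := by positivity
  have hδ : 0 < δ := by positivity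
  have hnear : ∀ᶠ q in 𝓝[>] z, q ∈ Ioo z T ∧
      ∀ σ, dist (speciesSup (u q) σ) (speciesSup (u z) σ) < η :=
    Eventually.and (Ioo_mem_nhdsGT hz.2) <| eventually_all.2 fun σ => Metric.tendsto_nhds.1
      (((hu.mild.continuousOn_speciesSup σ) z (Ico_subset_Icc_self hz)).mono_of_mem_nhdsWithin <|
        mem_of_superset (Ioo_mem_nhdsGT hz.2) fun q hq => ⟨hz.1.trans hq.1.le, hq.2.le⟩) η hη
  filter_upwards [eventually_nhdsGT_forall_Ioc hnear, self_mem_nhdsWithin,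
    Ioo_mem_nhdsGT (lt_add_of_pos_right z hδ)] with w hnear hzw hwδ
  have hwT : w ≤ T := (hnear w ⟨hzw, le_rfl⟩).1.2.le
  have hIcc : ∀ q ∈ Icc z w, q ∈ Icc 0 T := fun q hq => ⟨hz.1.trans hq.1, hq.2.trans hwT⟩
  have hstep := hu.normLinf_sub_le_of_forall_abs_sub_le hz.1 (le_of_lt hzw) hwT
    (fun q hq => hΛ q (hIcc q hq)) (fun q hq => hG q (hIcc q hq)) fun q hq σ => by
      rcases hq.1.eq_or_lt with rfl | hzq
      · simpa using hη.le
      · exact ((hnear q ⟨hzq, hq.2⟩).2 σ).le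
  have hrate : M * (Λ * (2 * η)) ≤ ε / 2 := by
    rw [show M * (Λ * (2 * η)) = ε / 2 * (M * Λ / (M * Λ + 1)) by simp only [η]; field_simp; ring]
    exact mul_le_of_le_one_right (by positivity) ((div_le_one (by positivity)).2 (by linarith))
  have hquad : M * Λ * G * (w - z) ≤ ε / 2 := by
    calc M * Λ * G * (w - z) ≤ (M * Λ * G + 1) * δ := by
          nlinarith [mul_nonneg (mul_nonneg (Nat.cast_nonneg M) hΛ0) hG0, hwδ.2, hzw]
      _ = ε / 2 := by simp only [δ]; field_simp
  have hwz : 0 ≤ w - z := sub_nonneg.2 hzw.le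
  nlinarith [mul_le_mul_of_nonneg_left hrate hwz, mul_le_mul_of_nonneg_left hquad hwz]

theorem normLinf_le (hu : PositiveMildSolution P T u) {t : ℝ} (ht : t ∈ Icc 0 T) :
    normLinf (u t) ≤ normLinf (u 0) :=
  le_of_forall_eventually_sub_le_mul (f := fun r => normLinf (u r))
    (continuousOn_finsetSum _ fun σ _ => hu.mild.continuousOn_speciesSup σ)
    (fun _ hz _ hε => hu.eventually_normLinf_sub_le hz hε) ht

end PositiveMildSolution

/-- L∞ growth estimate (Lemma B.4, eq. (B.2)): there is a constant C > 0 depending only on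
the model parameters such that every positive mild solution on [0,T] with positive weight
denominators satisfies ‖f(t)‖_∞ ≤ ‖f(0)‖_∞ exp(C ∫₀ᵗ Φ(τ) dτ), where
Φ(τ) = β + max_{1≤l≤M⁻} Σ_k W^(l)_k(f(τ)). -/
theorem LinfinityBound (M : ℕ) (P : Params M) :
    ∃ C > (0:ℝ), ∀ T : ℝ, 0 ≤ T → ∀ u : ℝ → Fin M → ℝ → ℝ,
      MildSolution P T u → PositiveOn T u →
      (∀ t ∈ Set.Icc (0:ℝ) T,
        (∀ l ∈ bSet P, 0 < ∑ n : Fin M, P.wb l n * Fc (u t) n) ∧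
          0 < ∑ n : Fin M, P.wint n * Fc (u t) n) →
      ∀ t ∈ Set.Icc (0:ℝ) T,
        normLinf (u t) ≤ normLinf (u 0) *
          Real.exp (C * ∫ τ in (0:ℝ)..t,
            (P.beta + sSup {y : ℝ | ∃ l ∈ bSet P, y = ∑ k : Fin M, Wgt (P.wb l) (u τ) k})) := by
  refine ⟨1, one_pos, fun T _ u hmild hpos hden t ht => ?_⟩
  have hΦ : 0 ≤ ∫ τ in (0:ℝ)..t,
      (P.beta + sSup {y : ℝ | ∃ l ∈ bSet P, y = ∑ k : Fin M, Wgt (P.wb l) (u τ) k}) := by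
    refine intervalIntegral.integral_nonneg ht.1 fun τ hτ => add_nonneg P.hbeta ?_
    refine Real.sSup_nonneg ?_
    rintro _ ⟨l, hl, rfl⟩
    exact Finset.sum_nonneg fun k _ => Wgt_nonneg (P.hwb l (Finset.mem_filter.1 hl).2 k).le
      ((hden τ ⟨hτ.1, hτ.2.trans ht.2⟩).1 l hl).le
  calc normLinf (u t) ≤ normLinf (u 0) := PositiveMildSolution.normLinf_le ⟨hmild, hpos, hden⟩ ht
    _ ≤ _ := le_mul_of_one_le_right (normLinf_nonneg _) (Real.one_le_exp (by linarith))

end GBN
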